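/- If T is a self-adjoint adjointable operator on a Hilbert C*-module H over a C*-algebra A, then the spatial numerical radius equals the operator norm: w̃(T) = ‖T‖. -/

import Mathlib

open scoped ComplexOrder RightActions

noncomputable section

/-- The Hilbert C⋆-module class as it stood in the older Mathlib (right `A`-action via `Aᵐᵒᵖ`);
Mathlib's `CStarModule` now takes a left action `[SMul A E]` instead. -/
class RightCStarModule (A E : Type*) [NonUnitalSemiring A] [StarRing A]
    [Module ℂ A] [AddCommGroup E] [Module ℂ E] [PartialOrder A] [SMul Aᵐᵒᵖ E] [Norm A] [Norm E]
    extends Inner A E where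
  inner_add_right {x} {y} {z} : inner x (y + z) = inner x y + inner x z
  inner_self_nonneg {x} : 0 ≤ inner x x
  inner_self {x} : inner x x = 0 ↔ x = 0
  inner_op_smul_right {a : A} {x y : E} : inner x (y <• a) = inner x y * a
  inner_smul_right_complex {z : ℂ} {x} {y} : inner x (z • y) = z • inner x y
  star_inner x y : star (inner x y) = inner y x
  norm_eq_sqrt_norm_inner_self x : ‖x‖ = √‖inner x x‖

variable {A : Type*} [NonUnitalCStarAlgebra A] [PartialOrder A] [StarOrderedRing A]
variable {H : Type*} [NormedAddCommGroup H] [NormedSpace ℂ H] [SMul Aᵐᵒᵖ H] [RightCStarModule A H]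

/-- A state on the C*-algebra `A`: a norm-one functional that is positive. -/
def IsState (ρ : A →L[ℂ] ℂ) : Prop :=
  ‖ρ‖ = 1 ∧ ∀ a : A, 0 ≤ ρ (star a * a)

/-- The spatial numerical radius `w̃(T)`. -/
def spatialNumRadius (A : Type*) {H : Type*} [NonUnitalCStarAlgebra A] [PartialOrder A]
    [StarOrderedRing A] [NormedAddCommGroup H] [NormedSpace ℂ H] [SMul Aᵐᵒᵖ H] [RightCStarModule A H]
    (T : H →L[ℂ] H) : ℝ :=
  sSup {r : ℝ | ∃ (x : H) (ρ : A →L[ℂ] ℂ), IsState ρ ∧ ρ (inner A x x : A) = 1 ∧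
    r = ‖ρ (inner A x (T x) : A)‖}

/-- The numerical radius `w(T)` of a Hilbert C*-module operator. -/
def numRadius (A : Type*) {H : Type*} [NonUnitalCStarAlgebra A] [PartialOrder A]
    [StarOrderedRing A] [NormedAddCommGroup H] [NormedSpace ℂ H] [SMul Aᵐᵒᵖ H] [RightCStarModule A H]
    (T : H →L[ℂ] H) : ℝ :=
  sSup {r : ℝ | ∃ x : H, ‖x‖ = 1 ∧ r = ‖(inner A (T x) x : A)‖}

namespace RightCStarModule

lemma inner_add_left {x y z : H} : (inner A (x + y) z : A) = inner A x z + inner A y z := by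
  rw [← RightCStarModule.star_inner z (x + y), RightCStarModule.inner_add_right, star_add,
    RightCStarModule.star_inner, RightCStarModule.star_inner]

lemma inner_smul_left_complex {z : ℂ} {x y : H} : (inner A (z • x) y : A) = star z • inner A x y := by
  rw [← RightCStarModule.star_inner y (z • x), RightCStarModule.inner_smul_right_complex, star_smul,
    RightCStarModule.star_inner]

lemma inner_smul_right_real {r : ℝ} {x y : H} : (inner A x (r • y) : A) = r • inner A x y := by
  rw [← algebraMap_smul ℂ r y, RightCStarModule.inner_smul_right_complex, algebraMap_smul]

lemma inner_smul_left_real {r : ℝ} {x y : H} : (inner A (r • x) y : A) = r • inner A x y := by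
  rw [← algebraMap_smul ℂ r x, inner_smul_left_complex, Complex.coe_algebraMap, Complex.star_def,
    Complex.conj_ofReal, ← Complex.coe_algebraMap, algebraMap_smul]

lemma norm_sq_eq {x : H} : ‖x‖ ^ 2 = ‖(inner A x x : A)‖ := by
  rw [RightCStarModule.norm_eq_sqrt_norm_inner_self (A := A) x, Real.sq_sqrt (norm_nonneg _)]

end RightCStarModule

lemma state_nonneg {ρ : A →L[ℂ] ℂ} (hρ : ∀ a : A, 0 ≤ ρ (star a * a)) {a : A} (ha : 0 ≤ a) :
    0 ≤ ρ a := by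
  rw [StarOrderedRing.nonneg_iff] at ha
  induction ha using AddSubmonoid.closure_induction with
  | mem x hx => obtain ⟨s, rfl⟩ := hx; exact hρ s
  | zero => simp
  | add x y _ _ hx hy => rw [map_add]; exact add_nonneg hx hy

lemma state_self_im {ρ : A →L[ℂ] ℂ} (hρ : ∀ a : A, 0 ≤ ρ (star a * a)) (z : H) :
    (ρ (inner A z z : A)).im = 0 :=
  ((Complex.nonneg_iff.mp (state_nonneg hρ RightCStarModule.inner_self_nonneg)).2).symm

lemma state_self_re_nonneg {ρ : A →L[ℂ] ℂ} (hρ : ∀ a : A, 0 ≤ ρ (star a * a)) (z : H) :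
    0 ≤ (ρ (inner A z z : A)).re :=
  (Complex.nonneg_iff.mp (state_nonneg hρ RightCStarModule.inner_self_nonneg)).1

lemma state_conj_symm {ρ : A →L[ℂ] ℂ} (hρ : ∀ a : A, 0 ≤ ρ (star a * a)) (x y : H) :
    (starRingEnd ℂ) (ρ (inner A y x : A)) = ρ (inner A x y : A) := by
  set a := ρ (inner A x y : A) with ha
  set b := ρ (inner A y x : A) with hb
  have f1 : a.im + b.im = 0 := by
    have h := state_self_im hρ (x + y)
    simp only [RightCStarModule.inner_add_left, RightCStarModule.inner_add_right, map_add,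
      Complex.add_im, state_self_im hρ x, state_self_im hρ y, ← ha, ← hb] at h
    linarith
  have f2 : a.re - b.re = 0 := by
    have e2 : ρ (inner A (x + Complex.I • y) (x + Complex.I • y) : A)
        = ρ (inner A x x : A) + Complex.I * a - Complex.I * b + ρ (inner A y y : A) := by
      simp only [RightCStarModule.inner_add_left, RightCStarModule.inner_add_right,
        RightCStarModule.inner_smul_left_complex, RightCStarModule.inner_smul_right_complex,
        RCLike.star_def, Complex.conj_I, map_add, map_smul, smul_eq_mul, neg_smul, map_neg,
        ← ha, ← hb]
      ring_nf
      rw [Complex.I_sq]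
      ring
    have h := state_self_im hρ (x + Complex.I • y)
    rw [e2] at h
    simp only [Complex.add_im, Complex.sub_im, Complex.mul_im, Complex.I_re, Complex.I_im,
      state_self_im hρ x, state_self_im hρ y] at h
    linarith
  apply Complex.ext <;> simp only [Complex.conj_re, Complex.conj_im] <;> linarith

/-- The semi-inner-product on `H` induced by a positive functional. -/
def stateCore {ρ : A →L[ℂ] ℂ} (hρ : ∀ a : A, 0 ≤ ρ (star a * a)) :
    PreInnerProductSpace.Core ℂ H where
  inner x y := ρ (inner A x y : A)
  conj_inner_symm := state_conj_symm hρ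
  re_inner_nonneg := state_self_re_nonneg hρ
  add_left x y z := by simp only [RightCStarModule.inner_add_left, map_add]
  smul_left x y r := by
    simp only [RightCStarModule.inner_smul_left_complex, map_smul, RCLike.star_def, smul_eq_mul]

lemma state_cauchy_schwarz {ρ : A →L[ℂ] ℂ} (hρ : ∀ a : A, 0 ≤ ρ (star a * a)) (x y : H) :
    ‖ρ (inner A x y : A)‖ ^ 2 ≤ (ρ (inner A x x : A)).re * (ρ (inner A y y : A)).re := by
  letI c : PreInnerProductSpace.Core ℂ H := stateCore hρ
  letI : Inner ℂ H := c.toInner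
  have h := @InnerProductSpace.Core.inner_mul_inner_self_le ℂ H _ _ _ c x y
  have hconj := state_conj_symm hρ (x := y) (y := x)
  have habs : ‖ρ (inner A y x : A)‖ = ‖ρ (inner A x y : A)‖ := by
    rw [← hconj]; exact RCLike.norm_conj _
  rw [pow_two]
  calc ‖ρ (inner A x y : A)‖ * ‖ρ (inner A x y : A)‖
      = ‖ρ (inner A x y : A)‖ * ‖ρ (inner A y x : A)‖ := by rw [habs]
    _ ≤ (ρ (inner A x x : A)).re * (ρ (inner A y y : A)).re := h

lemma state_re_le_sq_norm {ρ : A →L[ℂ] ℂ} (hρ1 : ‖ρ‖ = 1) (z : H) :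
    (ρ (inner A z z : A)).re ≤ ‖z‖ ^ 2 := by
  calc (ρ (inner A z z : A)).re ≤ ‖ρ (inner A z z : A)‖ := Complex.re_le_norm _
    _ ≤ ‖ρ‖ * ‖(inner A z z : A)‖ := ρ.le_opNorm _
    _ = ‖z‖ ^ 2 := by rw [hρ1, one_mul, RightCStarModule.norm_sq_eq (A := A)]

lemma abs_state_inner_le_norm (T : H →L[ℂ] H)
    (hT : ∀ x y : H, (inner A (T x) y : A) = inner A x (T y))
    (x : H) (ρ : A →L[ℂ] ℂ) (hρ1 : ‖ρ‖ = 1) (hρ2 : ∀ a : A, 0 ≤ ρ (star a * a))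
    (hx : ρ (inner A x x : A) = 1) :
    ‖ρ (inner A x (T x) : A)‖ ≤ ‖T‖ := by
  set f : ℕ → ℝ := fun k => (ρ (inner A ((T ^ k) x) ((T ^ k) x) : A)).re with hf
  have hf0 : f 0 = 1 := by
    simp only [hf, pow_zero, ContinuousLinearMap.one_apply, hx, Complex.one_re]
  have hfnn : ∀ k, 0 ≤ f k := fun k => state_self_re_nonneg hρ2 _
  have happ : ∀ k, (T ^ (k + 1)) x = T ((T ^ k) x) := by
    intro k
    rw [pow_succ']
    rfl
  have hfle : ∀ k, f k ≤ (‖T‖ ^ k * ‖x‖) ^ 2 := by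
    intro k
    refine (state_re_le_sq_norm hρ1 _).trans ?_
    have h1 : ‖(T ^ k) x‖ ≤ ‖T‖ ^ k * ‖x‖ := by
      induction k with
      | zero => simp
      | succ n ih =>
        rw [happ n]
        calc ‖T ((T ^ n) x)‖ ≤ ‖T‖ * ‖(T ^ n) x‖ := T.le_opNorm _
          _ ≤ ‖T‖ * (‖T‖ ^ n * ‖x‖) := by
              exact mul_le_mul_of_nonneg_left ih (norm_nonneg T)
          _ = ‖T‖ ^ (n + 1) * ‖x‖ := by ring
    exact pow_le_pow_left₀ (norm_nonneg _) h1 2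
  have hlog : ∀ k, f (k + 1) ^ 2 ≤ f k * f (k + 2) := by
    intro k
    have key : (inner A ((T ^ (k + 1)) x) ((T ^ (k + 1)) x) : A)
        = inner A ((T ^ k) x) ((T ^ (k + 2)) x) := by
      rw [happ k, hT, happ (k + 1), happ k]
    have hcs := state_cauchy_schwarz hρ2 ((T ^ k) x) ((T ^ (k + 2)) x)
    have hre : f (k + 1) ≤ ‖ρ (inner A ((T ^ k) x) ((T ^ (k + 2)) x) : A)‖ := by
      rw [hf]
      simp only [key]
      exact Complex.re_le_norm _
    calc f (k + 1) ^ 2 ≤ ‖ρ (inner A ((T ^ k) x) ((T ^ (k + 2)) x) : A)‖ ^ 2 :=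
          pow_le_pow_left₀ (hfnn _) hre 2
      _ ≤ f k * f (k + 2) := hcs
  have hpow : ∀ k, f 1 ^ (k + 1) ≤ f (k + 1) ∧ f 1 * f (k + 1) ≤ f (k + 2) := by
    intro k
    induction k with
    | zero =>
      constructor
      · simp
      · have := hlog 0
        rw [hf0, one_mul] at this
        nlinarith [this]
    | succ n ih =>
      constructor
      · calc f 1 ^ (n + 2) = f 1 ^ (n + 1) * f 1 := by ring
          _ ≤ f (n + 1) * f 1 := mul_le_mul_of_nonneg_right ih.1 (hfnn 1)
          _ = f 1 * f (n + 1) := by ring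
          _ ≤ f (n + 2) := ih.2
      · rcases eq_or_lt_of_le (hfnn (n + 1)) with hz | hpos
        · have h1 : f 1 ^ (n + 1) ≤ 0 := by rw [hz]; exact ih.1
          have h2 : f 1 = 0 := by
            have := pow_nonneg (hfnn 1) (n + 1)
            have h3 : f 1 ^ (n + 1) = 0 := le_antisymm h1 this
            exact pow_eq_zero_iff (Nat.succ_ne_zero n) |>.mp h3
          rw [h2, zero_mul]
          exact hfnn _
        · have h1 := hlog (n + 1)
          have h2 := ih.2
          have goal' : f (n + 1) * (f 1 * f (n + 2)) ≤ f (n + 1) * f (n + 3) := by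
            nlinarith [hfnn (n + 2), hfnn (n + 1), hfnn 1]
          exact le_of_mul_le_mul_left goal' hpos
  have hx0 : x ≠ 0 := by
    rintro rfl
    rw [show (inner A (0 : H) (0 : H) : A) = 0 from (RightCStarModule.inner_self (A := A)).mpr rfl, map_zero] at hx
    exact zero_ne_one hx
  have hf1 : f 1 ≤ ‖T‖ ^ 2 := by
    by_contra hlt
    push_neg at hlt
    have hTpos : 0 < ‖T‖ ^ 2 ∨ ‖T‖ = 0 := by
      rcases eq_or_lt_of_le (norm_nonneg T) with h | h
      · right; exact h.symm
      · left; positivity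
    rcases hTpos with hTpos | hT0
    swap
    · have := hfle 1
      rw [hT0] at this
      simp at this
      nlinarith [this, hlt]
    have hr : 1 < f 1 / ‖T‖ ^ 2 := (one_lt_div hTpos).mpr hlt
    obtain ⟨k, hk⟩ := pow_unbounded_of_one_lt (‖x‖ ^ 2) hr
    have hb : (f 1 / ‖T‖ ^ 2) ^ (k + 1) ≤ ‖x‖ ^ 2 := by
      rw [div_pow, div_le_iff₀ (by positivity)]
      calc f 1 ^ (k + 1) ≤ f (k + 1) := (hpow k).1
        _ ≤ (‖T‖ ^ (k + 1) * ‖x‖) ^ 2 := hfle (k + 1)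
        _ = ‖x‖ ^ 2 * (‖T‖ ^ 2) ^ (k + 1) := by ring
    have hmono : (f 1 / ‖T‖ ^ 2) ^ k ≤ (f 1 / ‖T‖ ^ 2) ^ (k + 1) :=
      pow_le_pow_right₀ hr.le (Nat.le_succ k)
    linarith
  have hcs := state_cauchy_schwarz hρ2 x (T x)
  rw [hx] at hcs
  have hf1' : (ρ (inner A (T x) (T x) : A)).re = f 1 := by
    rw [hf]
    simp [pow_one]
  rw [Complex.one_re, one_mul, hf1'] at hcs
  have habs : ‖ρ (inner A x (T x) : A)‖ ^ 2 ≤ ‖T‖ ^ 2 := hcs.trans hf1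
  nlinarith [norm_nonneg (ρ (inner A x (T x) : A)), norm_nonneg T, habs]

section unital

variable {B : Type*} [CStarAlgebra B] [Nontrivial B]

lemma im_eq_zero_of_unital_functional (g : B →L[ℂ] ℂ) (hg : ‖g‖ = 1) (hg1 : g 1 = 1)
    {c : B} (hc : IsSelfAdjoint c) : (g c).im = 0 := by
  have key : ∀ t : ℝ, (g c).re ^ 2 + ((g c).im + t) ^ 2 ≤ ‖c‖ ^ 2 + t ^ 2 := by
    intro t
    set z : ℂ := (t : ℂ) * Complex.I with hzdef
    have hz : star z = -z := by
      simp [hzdef, Complex.star_def, Complex.conj_I, mul_comm]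
    have hz2 : -z * z = ((t ^ 2 : ℝ) : ℂ) := by
      rw [hzdef]
      push_cast
      rw [show -((t:ℂ) * Complex.I) * ((t:ℂ) * Complex.I)
        = -(Complex.I * Complex.I) * (t:ℂ) ^ 2 by ring, Complex.I_mul_I]
      ring
    have h2 : star (c + z • 1) * (c + z • 1) = star c * c + ((t ^ 2 : ℝ) : ℂ) • (1 : B) := by
      rw [star_add, star_smul, star_one, hz, add_mul, mul_add, mul_add]
      rw [mul_smul_comm, mul_one, smul_mul_assoc, one_mul, smul_mul_assoc, one_mul,
        smul_smul, hz2, hc.star_eq]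
      rw [neg_smul]
      abel
    have h3 : ‖c + z • 1‖ ^ 2 ≤ ‖c‖ ^ 2 + t ^ 2 := by
      rw [pow_two, ← CStarRing.norm_star_mul_self, h2]
      calc ‖star c * c + ((t ^ 2 : ℝ) : ℂ) • (1 : B)‖
          ≤ ‖star c * c‖ + ‖((t ^ 2 : ℝ) : ℂ) • (1 : B)‖ := norm_add_le _ _
        _ ≤ ‖c‖ ^ 2 + t ^ 2 := by
            rw [CStarRing.norm_star_mul_self, norm_smul, norm_one, mul_one]
            simp [pow_two, abs_of_nonneg (sq_nonneg t)]
    have h1 : g (c + z • 1) = g c + z := by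
      rw [map_add, map_smul, hg1, smul_eq_mul, mul_one]
    have h4 : ‖g c + z‖ ^ 2 ≤ ‖c‖ ^ 2 + t ^ 2 := by
      rw [← h1]
      calc ‖g (c + z • 1)‖ ^ 2 ≤ (‖g‖ * ‖c + z • 1‖) ^ 2 := by
            have := g.le_opNorm (c + z • 1)
            exact pow_le_pow_left₀ (norm_nonneg _) this 2
        _ = ‖c + z • 1‖ ^ 2 := by rw [hg]; ring
        _ ≤ ‖c‖ ^ 2 + t ^ 2 := h3
    have h5 : ‖g c + z‖ ^ 2 = (g c).re ^ 2 + ((g c).im + t) ^ 2 := by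
      rw [Complex.sq_norm, Complex.normSq_apply]
      simp [hzdef]
      ring
    rw [h5] at h4
    exact h4
  by_contra hβ
  set β := (g c).im with hβdef
  set α := (g c).re with hαdef
  set t₀ : ℝ := (‖c‖ ^ 2 - α ^ 2 - β ^ 2 + 1) / (2 * β) with ht₀
  have h2bt : 2 * β * t₀ = ‖c‖ ^ 2 - α ^ 2 - β ^ 2 + 1 := by
    rw [ht₀]
    field_simp
  have hkey := key t₀
  nlinarith [hkey, h2bt]

lemma nonneg_of_unital_functional [PartialOrder B] [StarOrderedRing B]
    (g : B →L[ℂ] ℂ) (hg : ‖g‖ = 1) (hg1 : g 1 = 1) {c : B} (hc : 0 ≤ c) : 0 ≤ g c := by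
  have hsa : IsSelfAdjoint c := .of_nonneg hc
  set d : B := algebraMap ℝ B ‖c‖ - c with hd
  have hd0 : 0 ≤ d := sub_nonneg.mpr (hsa.le_algebraMap_norm_self)
  have hdsa : IsSelfAdjoint d := .of_nonneg hd0
  have hdle : ‖d‖ ≤ ‖c‖ := by
    rw [CStarAlgebra.norm_le_iff_le_algebraMap d (norm_nonneg c) hd0, hd]
    simpa using hc
  have hgd : g d = (‖c‖ : ℂ) - g c := by
    have halg : algebraMap ℝ B ‖c‖ = ((‖c‖ : ℂ)) • (1 : B) := by
      rw [IsScalarTower.algebraMap_apply ℝ ℂ B, Algebra.algebraMap_eq_smul_one]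
      norm_num
    rw [hd, map_sub, halg, map_smul, hg1, smul_eq_mul, mul_one]
  have him : (g c).im = 0 := im_eq_zero_of_unital_functional g hg hg1 hsa
  have himd : (g d).im = 0 := im_eq_zero_of_unital_functional g hg hg1 hdsa
  have habs : ‖g d‖ ≤ ‖c‖ := by
    calc ‖g d‖ ≤ ‖g‖ * ‖d‖ := g.le_opNorm d
      _ ≤ ‖c‖ := by rw [hg, one_mul]; exact hdle
  have hred : (g d).re ≤ ‖c‖ := (Complex.re_le_norm _).trans habs
  have hgcre : 0 ≤ (g c).re := by
    have : (g d).re = ‖c‖ - (g c).re := by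
      rw [hgd]
      simp
    linarith
  exact Complex.nonneg_iff.mpr ⟨hgcre, him.symm⟩

end unital

set_option maxHeartbeats 1000000 in
set_option synthInstance.maxHeartbeats 400000 in
lemma exists_state_eq_norm {a : A} (ha : 0 ≤ a) (h0 : a ≠ 0) :
    ∃ ρ : A →L[ℂ] ℂ, IsState ρ ∧ ρ a = (‖a‖ : ℂ) := by
  set b : Unitization ℂ A := (a : Unitization ℂ A) with hbdef
  have hb : 0 ≤ b := Unitization.inr_nonneg_iff.mpr ha
  have hbsa : IsSelfAdjoint b := .of_nonneg hb
  haveI : IsStarNormal b := hbsa.isStarNormal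
  have hnb : ‖b‖ = ‖a‖ := Unitization.norm_inr a
  have hb0 : b ≠ 0 := by
    simpa [hbdef] using (Unitization.inr_injective (R := ℂ)).ne h0
  have hspec : ‖b‖ ∈ spectrum ℝ b := CStarAlgebra.norm_mem_spectrum_of_nonneg hb
  have hspecC : (‖b‖ : ℂ) ∈ spectrum ℂ b := by
    simpa using spectrum.algebraMap_mem ℂ hspec
  -- character on the elemental algebra
  obtain ⟨φ, hφ⟩ := (StarAlgebra.elemental.bijective_characterSpaceToSpectrum b).2 ⟨_, hspecC⟩
  have hφval : φ ⟨b, StarAlgebra.elemental.self_mem ℂ b⟩ = (‖b‖ : ℂ) :=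
    congrArg Subtype.val hφ
  -- the character as a continuous linear map
  set ψ : StarAlgebra.elemental ℂ b →L[ℂ] ℂ :=
    AlgHom.toContinuousLinearMap (WeakDual.CharacterSpace.toAlgHom φ) with hψdef
  have hψnorm : ‖ψ‖ = 1 := AlgHom.toContinuousLinearMap_norm _
  -- Hahn-Banach extension
  obtain ⟨g, hg, hgnorm⟩ :=
    exists_extension_norm_eq ((StarAlgebra.elemental ℂ b).toSubalgebra.toSubmodule) ψ
  replace hgnorm : ‖g‖ = 1 := hgnorm.trans hψnorm
  have hg1 : g 1 = 1 := by
    have h := hg ⟨1, (StarAlgebra.elemental ℂ b).toSubalgebra.one_mem⟩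
    have h2 : ψ ⟨1, (StarAlgebra.elemental ℂ b).toSubalgebra.one_mem⟩ = 1 :=
      map_one (WeakDual.CharacterSpace.toAlgHom φ)
    simpa using h.trans h2
  have hgb : g b = (‖b‖ : ℂ) := by
    have := hg ⟨b, StarAlgebra.elemental.self_mem ℂ b⟩
    rw [this]
    exact hφval
  -- the state on A
  set j : A →L[ℂ] Unitization ℂ A :=
    LinearMap.mkContinuous (Unitization.inrHom ℂ ℂ A) 1
      (fun x => by simp [Unitization.norm_inr]) with hjdef
  have hj : ∀ x : A, j x = (x : Unitization ℂ A) := fun x => rfl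
  refine ⟨g.comp j, ⟨?_, ?_⟩, ?_⟩
  · -- norm = 1
    apply le_antisymm
    · refine ContinuousLinearMap.opNorm_le_bound _ zero_le_one fun x => ?_
      calc ‖g (j x)‖ ≤ ‖g‖ * ‖j x‖ := g.le_opNorm _
        _ = ‖x‖ := by rw [hgnorm, one_mul, hj, Unitization.norm_inr]
        _ = 1 * ‖x‖ := (one_mul _).symm
    · have h1 : ‖a‖ ≤ ‖g.comp j‖ * ‖a‖ := by
        have := (g.comp j).le_opNorm a
        rw [ContinuousLinearMap.comp_apply, hj, ← hbdef, hgb] at this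
        simpa [hnb] using this
      have h2 : 0 < ‖a‖ := norm_pos_iff.mpr h0
      nlinarith
  · -- positivity
    intro x
    have hpos : 0 ≤ star (x : Unitization ℂ A) * (x : Unitization ℂ A) := star_mul_self_nonneg _
    have : g.comp j (star x * x) = g (star (x : Unitization ℂ A) * (x : Unitization ℂ A)) := by
      rw [ContinuousLinearMap.comp_apply, hj, Unitization.inr_mul, Unitization.inr_star]
    rw [this]
    exact nonneg_of_unital_functional g hgnorm hg1 hpos
  · rw [ContinuousLinearMap.comp_apply, hj, ← hbdef, hgb, hnb]




lemma inner_sub_right' (x y z : H) : (inner A x (y - z) : A) = inner A x y - inner A x z := by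
  rw [sub_eq_add_neg, RightCStarModule.inner_add_right,
    show -z = ((-1 : ℂ)) • z from (neg_one_smul ℂ z).symm,
    RightCStarModule.inner_smul_right_complex]
  simp [sub_eq_add_neg]

lemma inner_sub_left' (x y z : H) : (inner A (y - z) x : A) = inner A y x - inner A z x := by
  rw [sub_eq_add_neg, RightCStarModule.inner_add_left,
    show -z = ((-1 : ℂ)) • z from (neg_one_smul ℂ z).symm,
    RightCStarModule.inner_smul_left_complex]
  simp [sub_eq_add_neg]

/-- For a self-adjoint adjointable operator, the spatial numerical radius equals the norm. -/
theorem spatialNumRadius_eq_norm_of_selfAdjoint (T : H →L[ℂ] H)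
    (hT : ∀ x y : H, (inner A (T x) y : A) = inner A x (T y)) :
    spatialNumRadius A T = ‖T‖ := by
  set S := {r : ℝ | ∃ (x : H) (ρ : A →L[ℂ] ℂ), IsState ρ ∧ ρ (inner A x x : A) = 1 ∧
    r = ‖ρ (inner A x (T x) : A)‖} with hS
  have hwdef : spatialNumRadius A T = sSup S := rfl
  set w := sSup S with hw
  have hub : ∀ r ∈ S, r ≤ ‖T‖ := by
    rintro r ⟨x, ρ, hρ, hx, rfl⟩
    exact abs_state_inner_le_norm T hT x ρ hρ.1 hρ.2 hx
  have hbdd : BddAbove S := ⟨‖T‖, hub⟩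
  have hw0 : 0 ≤ w := Real.sSup_nonneg (by
    rintro r ⟨x, ρ, hρ, hx, rfl⟩
    positivity)
  have stepA : ∀ (ρ : A →L[ℂ] ℂ), IsState ρ → ∀ u : H,
      ‖ρ (inner A u (T u) : A)‖ ≤ w * (ρ (inner A u u : A)).re := by
    intro ρ hρ u
    set s := (ρ (inner A u u : A)).re with hs
    rcases eq_or_lt_of_le (state_self_re_nonneg hρ.2 u) with hz | hpos
    · have hs0 : s = 0 := by rw [hs, ← hz]
      have hcs := state_cauchy_schwarz hρ.2 u (T u)
      rw [← hs, hs0, zero_mul] at hcs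
      have h0 : ‖ρ (inner A u (T u) : A)‖ = 0 := by
        nlinarith [norm_nonneg (ρ (inner A u (T u) : A))]
      rw [h0, hs0, mul_zero]
    · have hsqrt : (0 : ℝ) < Real.sqrt s := Real.sqrt_pos.mpr hpos
      set c : ℝ := (Real.sqrt s)⁻¹ with hc
      have hcc : c * c = s⁻¹ := by
        rw [hc, ← mul_inv, Real.mul_self_sqrt hpos.le]
      set u' : H := c • u with hu'
      have hsc : ρ (inner A u u : A) = (s : ℂ) :=
        Complex.ext (by simp [hs]) (by simp [state_self_im hρ.2 u])
      have hval : ρ (inner A u' u' : A) = 1 := by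
        rw [hu', RightCStarModule.inner_smul_left_real, RightCStarModule.inner_smul_right_real,
          smul_smul, ContinuousLinearMap.map_smul_of_tower, hcc, hsc]
        rw [show s⁻¹ • (s : ℂ) = ((s⁻¹ * s : ℝ) : ℂ) by push_cast [Complex.real_smul]; ring]
        rw [inv_mul_cancel₀ hpos.ne']
        norm_num
      have hmem : ‖ρ (inner A u' (T u') : A)‖ ∈ S := ⟨u', ρ, hρ, hval, rfl⟩
      have hle : ‖ρ (inner A u' (T u') : A)‖ ≤ w := le_csSup hbdd hmem
      have hTu' : T u' = c • T u := by rw [hu', ContinuousLinearMap.map_smul_of_tower]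
      have hval2 : ρ (inner A u' (T u') : A) = (s⁻¹ : ℝ) • ρ (inner A u (T u) : A) := by
        rw [hu', hTu', RightCStarModule.inner_smul_left_real, RightCStarModule.inner_smul_right_real,
          smul_smul, ContinuousLinearMap.map_smul_of_tower, hcc]
      have habs2 : ‖ρ (inner A u' (T u') : A)‖
          = s⁻¹ * ‖ρ (inner A u (T u) : A)‖ := by
        rw [hval2, Complex.real_smul, norm_mul, Complex.norm_real, Real.norm_eq_abs,
          abs_of_nonneg (inv_nonneg.mpr hpos.le)]
      rw [habs2] at hle
      have := mul_le_mul_of_nonneg_left hle hpos.le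
      rw [← mul_assoc, mul_inv_cancel₀ hpos.ne', one_mul] at this
      linarith
  have stepB : ∀ (ρ : A →L[ℂ] ℂ), IsState ρ → ∀ x : H,
      (ρ (inner A (T x) (T x) : A)).re ≤ w ^ 2 * ‖x‖ ^ 2 := by
    intro ρ hρ x
    set q : H → ℝ := fun z => (ρ (inner A z z : A)).re with hq
    have hqnn : ∀ z, 0 ≤ q z := fun z => state_self_re_nonneg hρ.2 z
    have hpar : ∀ p r : H, q (p + r) + q (p - r) = 2 * q p + 2 * q r := by
      intro p r
      have e : (inner A (p + r) (p + r) : A) + inner A (p - r) (p - r)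
          = (inner A p p : A) + inner A p p + inner A r r + inner A r r + (inner A p r - inner A p r)
            + (inner A r p - inner A r p) := by
        simp only [RightCStarModule.inner_add_left, RightCStarModule.inner_add_right,
          inner_sub_left', inner_sub_right']
        abel
      have e2 := congrArg (fun a : A => (ρ a).re) e
      simp only [map_add, map_sub, Complex.add_re, Complex.sub_re] at e2
      rw [hq]
      dsimp only
      linarith
    set β := (ρ (inner A (T x) (T x) : A)).re with hβ
    have hβnn : 0 ≤ β := state_self_re_nonneg hρ.2 _
    have hβc : ρ (inner A (T x) (T x) : A) = (β : ℂ) :=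
      Complex.ext (by simp [hβ]) (by simp [state_self_im hρ.2 (T x)])
    have hqx : q x ≤ ‖x‖ ^ 2 := state_re_le_sq_norm hρ.1 x
    have hkey : ∀ t : ℝ, 0 < t → 2 * β ≤ w * (t ^ 2 * β + (t⁻¹) ^ 2 * q x) := by
      intro t ht
      set p : H := t • T x with hp
      set r : H := t⁻¹ • x with hr
      have hexp : ∀ y z : H, ρ (inner A (y + z) (T (y + z)) : A)
          = ρ (inner A y (T y) : A) + ρ (inner A y (T z) : A) + ρ (inner A z (T y) : A)
            + ρ (inner A z (T z) : A) := by
        intro y z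
        rw [map_add T]
        simp only [RightCStarModule.inner_add_left, RightCStarModule.inner_add_right, map_add]
        ring
      have hexp' : ∀ y z : H, ρ (inner A (y - z) (T (y - z)) : A)
          = ρ (inner A y (T y) : A) - ρ (inner A y (T z) : A) - ρ (inner A z (T y) : A)
            + ρ (inner A z (T z) : A) := by
        intro y z
        rw [map_sub T]
        simp only [inner_sub_left', inner_sub_right', map_sub, map_add]
        ring
      have hcross1 : ρ (inner A p (T r) : A) = (β : ℂ) := by
        rw [hp, hr, ContinuousLinearMap.map_smul_of_tower, RightCStarModule.inner_smul_left_real,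
          RightCStarModule.inner_smul_right_real, smul_smul, mul_inv_cancel₀ ht.ne', one_smul, hβc]
      have hcross2 : ρ (inner A r (T p) : A) = (β : ℂ) := by
        rw [hp, hr, ContinuousLinearMap.map_smul_of_tower, RightCStarModule.inner_smul_left_real,
          RightCStarModule.inner_smul_right_real, smul_smul,
          inv_mul_cancel₀ ht.ne', one_smul, ← hT, hβc]
      have hdiff : ρ (inner A (p + r) (T (p + r)) : A) - ρ (inner A (p - r) (T (p - r)) : A)
          = 4 * (β : ℂ) := by
        rw [hexp p r, hexp' p r, hcross1, hcross2]
        ring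
      have hre : (ρ (inner A (p + r) (T (p + r)) : A)).re
          - (ρ (inner A (p - r) (T (p - r)) : A)).re = 4 * β := by
        have h := congrArg Complex.re hdiff
        rwa [Complex.sub_re, show ((4 : ℂ) * (β : ℂ)).re = 4 * β by simp] at h
      have hA1 := stepA ρ hρ (p + r)
      have hA2 := stepA ρ hρ (p - r)
      have habs1 : (ρ (inner A (p + r) (T (p + r)) : A)).re ≤ w * q (p + r) :=
        (Complex.re_le_norm _).trans hA1
      have habs2 : -(ρ (inner A (p - r) (T (p - r)) : A)).re ≤ w * q (p - r) := by
        have h1 := Complex.abs_re_le_norm (ρ (inner A (p - r) (T (p - r)) : A))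
        linarith [hA2, neg_le_abs ((ρ (inner A (p - r) (T (p - r)) : A)).re)]
      have hqp : q p = t ^ 2 * β := by
        rw [hq, hp]
        dsimp only
        rw [RightCStarModule.inner_smul_left_real, RightCStarModule.inner_smul_right_real, smul_smul,
          ContinuousLinearMap.map_smul_of_tower]
        simp [pow_two]
        exact Or.inl hβ.symm
      have hqr : q r = (t⁻¹) ^ 2 * q x := by
        rw [hq, hr]
        dsimp only
        rw [RightCStarModule.inner_smul_left_real, RightCStarModule.inner_smul_right_real, smul_smul,
          ContinuousLinearMap.map_smul_of_tower]
        simp [pow_two]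
      have hparpr := hpar p r
      rw [hqp, hqr] at hparpr
      nlinarith [hre, habs1, habs2, hparpr]
    rcases eq_or_lt_of_le hw0 with hw0' | hwpos
    · have h1 := hkey 1 one_pos
      rw [← hw0'] at h1
      simp at h1
      have hβ0 : β = 0 := le_antisymm (by linarith) hβnn
      rw [hβ0]
      positivity
    · have ht : (0 : ℝ) < Real.sqrt w⁻¹ := Real.sqrt_pos.mpr (inv_pos.mpr hwpos)
      have h1 := hkey _ ht
      have hsq : (Real.sqrt w⁻¹) ^ 2 = w⁻¹ := Real.sq_sqrt (inv_nonneg.mpr hw0)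
      have hsq' : ((Real.sqrt w⁻¹)⁻¹) ^ 2 = w := by
        rw [inv_pow, hsq, inv_inv]
      rw [hsq, hsq'] at h1
      have hww : w * (w⁻¹ * β + w * q x) = β + w ^ 2 * q x := by
        field_simp
      rw [hww] at h1
      have hfin : β ≤ w ^ 2 * q x := by linarith
      nlinarith [sq_nonneg w, hqx, hfin]
  have hmain : ∀ x : H, ‖T x‖ ≤ w * ‖x‖ := by
    intro x
    rcases eq_or_ne (T x) 0 with h0 | h0
    · rw [h0, norm_zero]
      positivity
    · have ha : (0 : A) ≤ inner A (T x) (T x) := RightCStarModule.inner_self_nonneg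
      have ha0 : (inner A (T x) (T x) : A) ≠ 0 := by
        rw [Ne, RightCStarModule.inner_self]
        exact h0
      obtain ⟨ρ, hρ, hρa⟩ := exists_state_eq_norm ha ha0
      have hβ : (ρ (inner A (T x) (T x) : A)).re = ‖T x‖ ^ 2 := by
        rw [hρa, Complex.ofReal_re, RightCStarModule.norm_sq_eq (A := A)]
      have hB := stepB ρ hρ x
      rw [hβ] at hB
      have h1 : ‖T x‖ ^ 2 ≤ (w * ‖x‖) ^ 2 := by
        rw [mul_pow]
        exact hB
      have h2 : (0 : ℝ) ≤ w * ‖x‖ := by positivity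
      nlinarith [norm_nonneg (T x), h1, h2]
  rw [hwdef]
  exact le_antisymm (Real.sSup_le hub (norm_nonneg T)) (T.opNorm_le_bound hw0 hmain)
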